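/- arXiv:1501.04420 — 3 statements merged into one kernel-verified Lean document; each statement's English description precedes it below -/
import Mathlib

section
/- Let r, m, p be positive natural numbers, let F be a real r×m matrix such that F·Fᵀ is invertible, and set H = Fᵀ·(F·Fᵀ)⁻¹ (an m×r matrix). Let (Ω, μ) be a probability space and, for each column index c ∈ Fin m, let Q_c : Ω → Matrix (Fin p) (Fin p) ℝ be a Bochner-integrable random matrix whose expectation satisfies E[Q_c] = Σ_{l ∈ Fin r} (F l c) • K_l for fixed (nonrandom) real p×p matrices K_0, …, K_{r−1}. Then for every l ∈ Fin r, the method-of-moments estimator Σ_{c ∈ Fin m} (H c l) • Q_c is unbiased: E[Σ_{c ∈ Fin m} (H c l) • Q_c] = K_l. -/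
open Matrix MeasureTheory

/-- Unbiasedness of the method-of-moments estimators: if `E[Q_c] = Σ_l F l c • K l`
and `H = Fᵀ (F Fᵀ)⁻¹`, then `E[Σ_c H c l • Q_c] = K l` for every `l`. -/
theorem stmt0 {r m p : ℕ} (hr : 0 < r) (hm : 0 < m) (hp : 0 < p)
    (F : Matrix (Fin r) (Fin m) ℝ) (hF : IsUnit (F * Fᵀ).det)
    {Ω : Type*} [MeasurableSpace Ω] (μ : Measure Ω) [IsProbabilityMeasure μ]
    (Q : Fin m → Ω → Matrix (Fin p) (Fin p) ℝ)
    (K : Fin r → Matrix (Fin p) (Fin p) ℝ)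
    (hint : ∀ (c : Fin m) (i j : Fin p), Integrable (fun ω => Q c ω i j) μ)
    (hE : ∀ c : Fin m,
      (Matrix.of fun i j => ∫ ω, Q c ω i j ∂μ) = ∑ l : Fin r, F l c • K l) :
    ∀ l : Fin r,
      (Matrix.of fun i j =>
        ∫ ω, (∑ c : Fin m, (Fᵀ * (F * Fᵀ)⁻¹) c l • Q c ω) i j ∂μ) = K l := by
  intro l
  set H := Fᵀ * (F * Fᵀ)⁻¹ with hH
  have key : (Matrix.of fun i j => ∫ ω, (∑ c : Fin m, H c l • Q c ω) i j ∂μ)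
      = ∑ c : Fin m, H c l • (Matrix.of fun i j => ∫ ω, Q c ω i j ∂μ) := by
    ext i j
    simp only [Matrix.of_apply, Matrix.sum_apply, Matrix.smul_apply, smul_eq_mul]
    rw [integral_finset_sum _ fun c _ => ((hint c i j).const_mul _)]
    congr 1
    ext c
    exact integral_const_mul _ _
  rw [key]
  have : ∑ c : Fin m, H c l • (∑ l' : Fin r, F l' c • K l')
      = ∑ l' : Fin r, (∑ c : Fin m, F l' c * H c l) • K l' := by
    simp_rw [Finset.smul_sum, smul_smul]
    rw [Finset.sum_comm]
    simp_rw [Finset.sum_smul, mul_comm]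
  simp_rw [hE]
  rw [this]
  have hFH : F * H = 1 := by
    rw [hH, ← Matrix.mul_assoc, Matrix.mul_nonsing_inv _ hF]
  have hentry : ∀ l' : Fin r, ∑ c : Fin m, F l' c * H c l = (1 : Matrix (Fin r) (Fin r) ℝ) l' l := by
    intro l'
    rw [← hFH]
    rfl
  simp_rw [hentry, Matrix.one_apply]
  simp [Finset.sum_ite_eq, Finset.mem_univ]
end

section
/- Let M be a real p×k matrix such that Mᵀ·M is invertible (M has full column rank), and let G be any generalized inverse of M·Mᵀ, i.e., a real p×p matrix satisfying (M·Mᵀ)·G·(M·Mᵀ) = M·Mᵀ. Then Mᵀ·G·M = 1 (the k×k identity matrix). -/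
open Matrix

/-- Harville's generalized-inverse identity: if `M` has full column rank and `G`
is any g-inverse of `M * Mᵀ`, then `Mᵀ * G * M = 1`. -/
theorem stmt11 {p k : ℕ} (M : Matrix (Fin p) (Fin k) ℝ)
    (hM : IsUnit (Mᵀ * M).det)
    (G : Matrix (Fin p) (Fin p) ℝ)
    (hG : (M * Mᵀ) * G * (M * Mᵀ) = M * Mᵀ) :
    Mᵀ * G * M = 1 := by
  set N := Mᵀ * M with hN
  have hinv : N⁻¹ * N = 1 := Matrix.nonsing_inv_mul N hM
  have hinv2 : N * N⁻¹ = 1 := Matrix.mul_nonsing_inv N hM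
  have key : N * (Mᵀ * G * M) * N = N * N := by
    have := congrArg (fun X => Mᵀ * X * M) hG
    simpa only [hN, Matrix.mul_assoc] using this
  calc Mᵀ * G * M = (N⁻¹ * N) * (Mᵀ * G * M) * (N * N⁻¹) := by
        rw [hinv, hinv2, Matrix.one_mul, Matrix.mul_one]
    _ = N⁻¹ * (N * (Mᵀ * G * M) * N) * N⁻¹ := by
        simp only [Matrix.mul_assoc]
    _ = N⁻¹ * (N * N) * N⁻¹ := by rw [key]
    _ = 1 := by rw [← Matrix.mul_assoc N⁻¹ N N, hinv, Matrix.one_mul, hinv2]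
end

section
/- Let Λ be a real k×k symmetric positive definite matrix, and let B be a real p×k matrix such that Bᵀ·B is invertible. Let G be any generalized inverse of B·Λ·Bᵀ, i.e., (B·Λ·Bᵀ)·G·(B·Λ·Bᵀ) = B·Λ·Bᵀ. Then Λ·Bᵀ·G·B = 1 (the k×k identity). Consequently, for any ω ∈ ℝ^k the best-linear-unbiased-predictor expression applied to the noiseless observation vec = B *ᵥ ω recovers ω exactly: Λ·Bᵀ·G *ᵥ (B *ᵥ ω) = ω = ((Bᵀ·B)⁻¹·Bᵀ) *ᵥ (B *ᵥ ω). -/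
open Matrix

private lemma cancel_left {n : ℕ} {A X Y : Matrix (Fin n) (Fin n) ℝ}
    (hA : IsUnit A.det) (h : A * X = A * Y) : X = Y := by
  have := congrArg (fun M => A⁻¹ * M) h
  simpa [← Matrix.mul_assoc, Matrix.nonsing_inv_mul A hA] using this

private lemma cancel_right {n : ℕ} {A X Y : Matrix (Fin n) (Fin n) ℝ}
    (hA : IsUnit A.det) (h : X * A = Y * A) : X = Y := by
  have := congrArg (fun M => M * A⁻¹) h
  simpa [Matrix.mul_assoc, Matrix.mul_nonsing_inv A hA] using this

/-- Lemma 5: with `Λ` symmetric positive definite and `B` of full column rank,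
any g-inverse `G` of `B * Λ * Bᵀ` satisfies `Λ * Bᵀ * G * B = 1`, so the BLUP
applied to the noiseless observation `B *ᵥ ω` recovers `ω`, and coincides with
the OLS expression. -/
theorem stmt12 {p k : ℕ} (Λ : Matrix (Fin k) (Fin k) ℝ) (hΛ : Λ.PosDef)
    (B : Matrix (Fin p) (Fin k) ℝ) (hB : IsUnit (Bᵀ * B).det)
    (G : Matrix (Fin p) (Fin p) ℝ)
    (hG : (B * Λ * Bᵀ) * G * (B * Λ * Bᵀ) = B * Λ * Bᵀ) :
    Λ * Bᵀ * G * B = 1 ∧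
    ∀ ω : Fin k → ℝ,
      (Λ * Bᵀ * G) *ᵥ (B *ᵥ ω) = ω ∧ ((Bᵀ * B)⁻¹ * Bᵀ) *ᵥ (B *ᵥ ω) = ω := by
  have hΛd : IsUnit Λ.det := isUnit_iff_ne_zero.mpr (ne_of_gt hΛ.det_pos)
  have key : (Bᵀ * B) * (Λ * ((Bᵀ * G * B) * Λ * (Bᵀ * B)))
      = (Bᵀ * B) * (Λ * (Bᵀ * B)) := by
    have := congrArg (fun M => Bᵀ * M * B) hG
    simpa only [Matrix.mul_assoc] using this
  have h1 : (Bᵀ * G * B) * Λ * (Bᵀ * B) = Bᵀ * B :=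
    cancel_left hΛd (cancel_left hB key)
  have h2 : (Bᵀ * G * B) * Λ = 1 := by
    have : ((Bᵀ * G * B) * Λ) * (Bᵀ * B) = 1 * (Bᵀ * B) := by
      simpa [Matrix.mul_assoc] using h1
    exact cancel_right hB this
  have h3 : Λ * Bᵀ * G * B = 1 := by
    have := (mul_eq_one_comm).mp h2
    simpa [Matrix.mul_assoc] using this
  refine ⟨h3, fun ω => ⟨?_, ?_⟩⟩
  · rw [Matrix.mulVec_mulVec, show Λ * Bᵀ * G * B = 1 from h3, Matrix.one_mulVec]
  · rw [Matrix.mulVec_mulVec, Matrix.mul_assoc, Matrix.nonsing_inv_mul _ hB,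
      Matrix.one_mulVec]
end
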